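/- Let q > 0, q ≠ 1 and l > 0 a half-integer; set λ = 1 − q^{−2}. For the 2(2l+1)-dimensional spinor space with basis indexed by (component α ∈ {1,2}, weight n ∈ {−l,…,l}), the operator D with matrix blocks given by the symbols σ^{11}, σ^{12}, σ^{21}, σ^{22} of equation (7.19) — i.e. D acts on (s¹, s²) with (Ds)^α_n = ∑_β σ^{αβ}(t^l)_{n·} s^β — has, after normalisation by λ, exactly two eigenvalues on this space: q^{l+1}[l]_q and −q^{−l}[l+1]_q, where [x]_q = (q^x − q^{−x})/(q − q^{−1}). -/

import Mathlib

/-- The q-integer `[x]_q = (q^x - q^{-x})/(q - q⁻¹)`. -/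
noncomputable def qint (q x : ℝ) : ℝ := (q ^ x - q ^ (-x)) / (q - q⁻¹)

/-!
`D` couples the weight vectors `(0, k)` and `(1, k + 1)` only, so it is the direct sum of `n`
two-by-two blocks and of the one-by-one blocks at `(0, n)` and `(1, 0)`. With
`μ₁ = q^{l+1}[l]_q`, `μ₂ = -q^{-l}[l+1]_q` one has `λ μ₁ = q^{2l} - 1` and `λ μ₂ = q^{-2l-2} - 1`;
every two-by-two block has trace `λ (μ₁ + μ₂)` and determinant `λ² μ₁ μ₂`, and both one-by-one
blocks equal `λ μ₁`. By Cayley–Hamilton on the blocks, `(D/λ - μ₁)(D/λ - μ₂) = 0`, and as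
`μ₂ < 0 < μ₁` the operator `D/λ` is diagonalisable with spectrum in `{μ₁, μ₂}`. Both values occur
because `D/λ` has a nonzero off-diagonal entry, hence is not a scalar.
-/

namespace Module.End

variable {K V : Type*} [Field K] [AddCommGroup V] [Module K V] {f : End K V} {a b : K}

lemma sub_smul_one_mul_comm (a b : K) :
    (f - a • 1) * (f - b • 1) = (f - b • 1) * (f - a • 1) :=
  ((Commute.refl f).sub_right ((Commute.one_right f).smul_right b)).sub_left
    ((Commute.one_left _).smul_left a)

lemma eq_or_eq_of_hasEigenvalue (h : (f - a • 1) * (f - b • 1) = 0) {μ : K}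
    (hμ : f.HasEigenvalue μ) : μ = a ∨ μ = b := by
  obtain ⟨v, hv⟩ := hμ.exists_hasEigenvector
  have hv0 : ((μ - a) * (μ - b)) • v = 0 := by
    have hv' := LinearMap.congr_fun h v
    simp only [mul_apply, LinearMap.sub_apply, LinearMap.smul_apply, one_apply,
      LinearMap.zero_apply, hv.apply_eq_smul, map_sub, map_smul] at hv'
    rw [← hv']
    module
  rcases smul_eq_zero.mp hv0 with hμab | hv0
  · exact (mul_eq_zero.mp hμab).imp sub_eq_zero.mp sub_eq_zero.mp
  · exact absurd hv0 hv.2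

lemma range_le_eigenspace (h : (f - a • 1) * (f - b • 1) = 0) :
    LinearMap.range (f - b • 1) ≤ f.eigenspace a := by
  rintro _ ⟨v, rfl⟩
  rw [eigenspace_def, LinearMap.mem_ker, ← mul_apply, h, LinearMap.zero_apply]

lemma hasEigenvalue_of_ne_smul_one (h : (f - a • 1) * (f - b • 1) = 0) (hf : f ≠ b • 1) :
    f.HasEigenvalue a := by
  obtain ⟨v, hv⟩ : ∃ v, (f - b • 1) v ≠ 0 := by
    by_contra! h0
    exact hf (sub_eq_zero.mp (LinearMap.ext h0))
  exact hasEigenvalue_of_hasEigenvector ⟨range_le_eigenspace h ⟨v, rfl⟩, hv⟩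

lemma hasEigenvalue_iff_of_mul_eq_zero (h : (f - a • 1) * (f - b • 1) = 0) (ha : f ≠ a • 1)
    (hb : f ≠ b • 1) {μ : K} : f.HasEigenvalue μ ↔ μ = a ∨ μ = b := by
  refine ⟨eq_or_eq_of_hasEigenvalue h, ?_⟩
  rintro (rfl | rfl)
  · exact hasEigenvalue_of_ne_smul_one h hb
  · exact hasEigenvalue_of_ne_smul_one ((sub_smul_one_mul_comm _ _).trans h) ha

lemma iSup_eigenspace_eq_top (h : (f - a • 1) * (f - b • 1) = 0) (hab : a ≠ b) :
    ⨆ μ, f.eigenspace μ = ⊤ := by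
  refine eq_top_iff.mpr fun v _ => ?_
  have hv : v = (a - b)⁻¹ • ((f - b • 1) v - (f - a • 1) v) := by
    simp only [LinearMap.sub_apply, LinearMap.smul_apply, one_apply]
    rw [sub_sub_sub_cancel_left, ← sub_smul, smul_smul, inv_mul_cancel₀ (sub_ne_zero.mpr hab),
      one_smul]
  rw [hv]
  refine Submodule.smul_mem _ _ (Submodule.sub_mem _ ?_ ?_)
  · exact le_iSup f.eigenspace a (range_le_eigenspace h ⟨v, rfl⟩)
  · exact le_iSup f.eigenspace b
      (range_le_eigenspace ((sub_smul_one_mul_comm b a).trans h) ⟨v, rfl⟩)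

end Module.End

namespace Matrix

variable {K ι : Type*} [Field K] [Fintype ι] [DecidableEq ι] {A : Matrix ι ι K}

lemma toLin'_ne_smul_one {i j : ι} (hij : i ≠ j) (hA : A i j ≠ 0) (c : K) :
    toLin' A ≠ c • 1 := by
  intro h
  have hA' := congr_arg LinearMap.toMatrix' h
  rw [LinearMap.toMatrix'_toLin'] at hA'
  simp [hA', hij] at hA

lemma toLin'_inv_smul_sub_smul_one_mul_eq_zero {c μ ν : K} (hc : c ≠ 0)
    (h : (A - (c * μ) • 1) * (A - (c * ν) • 1) = 0) :
    (toLin' (c⁻¹ • A) - μ • 1) * (toLin' (c⁻¹ • A) - ν • 1) = 0 := by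
  have hscale (x : K) : c⁻¹ • A - x • 1 = c⁻¹ • (A - (c * x) • 1) := by
    rw [smul_sub, smul_smul, ← mul_assoc, inv_mul_cancel₀ hc, one_mul]
  have h' : (c⁻¹ • A - μ • 1) * (c⁻¹ • A - ν • 1) = 0 := by
    rw [hscale, hscale, smul_mul_smul_comm, h, smul_zero]
  simpa [toLin'_mul, Module.End.mul_eq_comp, Module.End.one_eq_id] using congr_arg toLin' h'

end Matrix

section ShiftBlockMatrix

variable {R : Type*} [CommRing R]

def shiftBlockMatrix (n : ℕ) (a b c e : ℕ → R) :
    Matrix (Fin 2 × Fin (n + 1)) (Fin 2 × Fin (n + 1)) R :=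
  Matrix.of fun p r =>
    if p.1 = 0 ∧ r.1 = 0 then (if p.2 = r.2 then a r.2 else 0)
    else if p.1 = 0 ∧ r.1 = 1 then (if (p.2 : ℕ) + 1 = (r.2 : ℕ) then b r.2 else 0)
    else if p.1 = 1 ∧ r.1 = 0 then (if (p.2 : ℕ) = (r.2 : ℕ) + 1 then c r.2 else 0)
    else (if p.2 = r.2 then e r.2 else 0)

lemma Fin.sum_ite_val_eq {n : ℕ} (m : ℕ) (g : Fin (n + 1) → R) :
    ∑ x : Fin (n + 1), (if (x : ℕ) = m then g x else 0) =
      if h : m < n + 1 then g ⟨m, h⟩ else 0 := by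
  split_ifs with h
  · rw [Fintype.sum_eq_single ⟨m, h⟩ fun x hx => if_neg fun hxm => hx (Fin.ext hxm)]
    simp
  · exact Finset.sum_eq_zero fun x _ => if_neg fun hxm : (x : ℕ) = m => h (hxm ▸ x.isLt)

variable {n : ℕ} {a b c e : ℕ → R} {α β : R}

lemma shiftBlockMatrix_mul_self
    (htr : ∀ k < n, a k + e (k + 1) = α + β)
    (hdet : ∀ k < n, a k * e (k + 1) - b (k + 1) * c k = α * β)
    (ha : a n = α) (he : e 0 = α) :
    shiftBlockMatrix n a b c e * shiftBlockMatrix n a b c e =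
      (α + β) • shiftBlockMatrix n a b c e - (α * β) • 1 := by
  ext ⟨i, j, hj⟩ ⟨i', k, hk⟩
  simp only [Matrix.mul_apply, Fintype.sum_prod_type, Fin.sum_univ_two]
  fin_cases i <;> fin_cases i'
  · simp [shiftBlockMatrix, ite_mul, mul_ite, Fin.sum_ite_val_eq, Matrix.one_apply]
    split_ifs with hjk hkn
    · linear_combination a k * htr k hkn - hdet k hkn
    · obtain rfl : k = n := by omega
      rw [ha]; ring
    all_goals ring
  · cases k with
    | zero => simp [shiftBlockMatrix]
    | succ k =>
      simp [shiftBlockMatrix, ite_mul, mul_ite, Fin.sum_ite_val_eq, (by omega : k ≤ n)]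
      split_ifs
      · linear_combination b (k + 1) * htr k (by omega)
      · ring
  · simp [shiftBlockMatrix, ite_mul, mul_ite, Fin.sum_ite_val_eq]
    split_ifs with hjk hkn
    · linear_combination c k * htr k hkn
    · omega
    all_goals ring
  · cases k with
    | zero =>
      simp [shiftBlockMatrix, Matrix.one_apply]
      split_ifs
      · rw [he]; ring
      · ring
    | succ k =>
      simp [shiftBlockMatrix, ite_mul, mul_ite, Fin.sum_ite_val_eq, Matrix.one_apply,
        (by omega : k ≤ n)]
      split_ifs
      · linear_combination e (k + 1) * htr k (by omega) - hdet k (by omega)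
      · ring

lemma shiftBlockMatrix_sub_smul_one_mul_sub_smul_one
    (htr : ∀ k < n, a k + e (k + 1) = α + β)
    (hdet : ∀ k < n, a k * e (k + 1) - b (k + 1) * c k = α * β)
    (ha : a n = α) (he : e 0 = α) :
    (shiftBlockMatrix n a b c e - α • 1) * (shiftBlockMatrix n a b c e - β • 1) = 0 := by
  set M := shiftBlockMatrix n a b c e
  calc (M - α • 1) * (M - β • 1) = M * M - ((α + β) • M - (α * β) • 1) := by
        simp only [sub_mul, mul_sub, smul_mul_assoc, mul_smul_comm, one_mul, mul_one]
        module
    _ = 0 := by rw [shiftBlockMatrix_mul_self htr hdet ha he, sub_self]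

lemma shiftBlockMatrix_apply_zero_one (j k : Fin (n + 1)) :
    shiftBlockMatrix n a b c e (0, j) (1, k) = if (j : ℕ) + 1 = k then b k else 0 := by
  simp [shiftBlockMatrix]

end ShiftBlockMatrix

/-- `sigmaαβ q l m` is the symbol `σ^{αβ}(t^l)` of (7.19) in the column of weight `m`
(`σ^{22}` does not depend on `l`). -/
noncomputable def sigma11 (q l m : ℝ) : ℝ := q ^ (2 * l) + q ^ (-2 * l - 2) - q ^ (-2 * m - 2) - 1

noncomputable def sigma12 (q l m : ℝ) : ℝ :=
  q ^ (-m + 1 / 2) * (1 - q ^ (-2 : ℝ)) * Real.sqrt (qint q (l + m) * qint q (l - m + 1))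

noncomputable def sigma21 (q l m : ℝ) : ℝ :=
  q ^ (-m - 1 / 2) * (1 - q ^ (-2 : ℝ)) * Real.sqrt (qint q (l - m) * qint q (l + m + 1))

noncomputable def sigma22 (q m : ℝ) : ℝ := q ^ (-2 * m) - 1

lemma Real.rpow_two_mul {q : ℝ} (hq : 0 ≤ q) (x : ℝ) : q ^ (2 * x) = (q ^ x) ^ 2 := by
  rw [mul_comm, Real.rpow_mul hq, Real.rpow_two]

section QIdentities

variable {q : ℝ}

lemma sq_sub_one_ne_zero (hq : 0 < q) (hq1 : q ≠ 1) : q ^ 2 - 1 ≠ 0 :=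
  sub_ne_zero.mpr ((pow_eq_one_iff_of_nonneg hq.le two_ne_zero).not.mpr hq1)

lemma one_sub_rpow_neg_two_ne_zero (hq : 0 < q) (hq1 : q ≠ 1) : 1 - q ^ (-2 : ℝ) ≠ 0 := by
  rw [Real.rpow_neg hq.le, Real.rpow_two, sub_ne_zero, ne_comm, ne_eq, inv_eq_one,
    pow_eq_one_iff_of_nonneg hq.le two_ne_zero]
  exact hq1

lemma qint_pos (hq : 0 < q) (hq1 : q ≠ 1) {x : ℝ} (hx : 0 < x) : 0 < qint q x := by
  rcases hq1.lt_or_gt with h | h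
  · refine div_pos_of_neg_of_neg (sub_neg.mpr ?_) (sub_neg.mpr ?_)
    · exact Real.rpow_lt_rpow_of_exponent_gt hq h (by linarith)
    · exact h.trans (one_lt_inv₀ hq |>.mpr h)
  · refine div_pos (sub_pos.mpr ?_) (sub_pos.mpr ?_)
    · exact Real.rpow_lt_rpow_of_exponent_lt h (by linarith)
    · exact (inv_lt_one_of_one_lt₀ h).trans h

lemma qint_nonneg (hq : 0 < q) (hq1 : q ≠ 1) {x : ℝ} (hx : 0 ≤ x) : 0 ≤ qint q x := by
  rcases hx.eq_or_lt with rfl | hx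
  · simp [qint]
  · exact (qint_pos hq hq1 hx).le

lemma sigma11_self (l : ℝ) : sigma11 q l l = q ^ (2 * l) - 1 := by
  rw [sigma11]; ring

lemma sigma22_neg (m : ℝ) : sigma22 q (-m) = q ^ (2 * m) - 1 := by
  rw [sigma22, neg_mul_neg]

lemma sigma11_add_sigma22 (l m : ℝ) :
    sigma11 q l m + sigma22 q (m + 1) = (q ^ (2 * l) - 1) + (q ^ (-2 * l - 2) - 1) := by
  rw [sigma11, sigma22, show -2 * (m + 1) = -2 * m - 2 by ring]
  ring

lemma sigma12_mul_sigma21 (hq : 0 < q) (hq1 : q ≠ 1) {l m : ℝ} (h₁ : 0 ≤ l + m + 1)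
    (h₂ : 0 ≤ l - m) :
    sigma12 q l (m + 1) * sigma21 q l m =
      q ^ (-2 * m - 1) * (1 - q ^ (-2 : ℝ)) ^ 2 * (qint q (l + m + 1) * qint q (l - m)) := by
  have hP : 0 ≤ qint q (l + m + 1) * qint q (l - m) :=
    mul_nonneg (qint_nonneg hq hq1 h₁) (qint_nonneg hq hq1 h₂)
  have hexp : q ^ (-(m + 1) + 1 / 2) * q ^ (-m - 1 / 2) = q ^ (-2 * m - 1) := by
    rw [← Real.rpow_add hq]; ring_nf
  rw [sigma12, sigma21, show l + (m + 1) = l + m + 1 by ring,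
    show l - (m + 1) + 1 = l - m by ring, mul_comm (qint q (l - m)), ← hexp]
  calc _ = q ^ (-(m + 1) + 1 / 2) * q ^ (-m - 1 / 2) * (1 - q ^ (-2 : ℝ)) ^ 2 *
        (√(qint q (l + m + 1) * qint q (l - m)) * √(qint q (l + m + 1) * qint q (l - m))) := by
        ring
    _ = _ := by rw [Real.mul_self_sqrt hP]

lemma sigma11_mul_sigma22_sub_sigma12_mul_sigma21 (hq : 0 < q) (hq1 : q ≠ 1) {l m : ℝ}
    (h₁ : 0 ≤ l + m + 1) (h₂ : 0 ≤ l - m) :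
    sigma11 q l m * sigma22 q (m + 1) - sigma12 q l (m + 1) * sigma21 q l m =
      (q ^ (2 * l) - 1) * (q ^ (-2 * l - 2) - 1) := by
  have := sq_sub_one_ne_zero hq hq1
  have := (Real.rpow_pos_of_pos hq l).ne'
  have := (Real.rpow_pos_of_pos hq m).ne'
  rw [sigma12_mul_sigma21 hq hq1 h₁ h₂, sigma11, sigma22, qint, qint]
  simp only [neg_mul, Real.rpow_add hq, Real.rpow_sub hq, Real.rpow_neg hq.le,
    Real.rpow_two_mul hq.le, Real.rpow_one, Real.rpow_two]
  field_simp
  ring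

lemma sigma12_ne_zero (hq : 0 < q) (hq1 : q ≠ 1) {l m : ℝ} (h₁ : 0 < l + m) (h₂ : 0 < l - m + 1) :
    sigma12 q l m ≠ 0 :=
  mul_ne_zero (mul_ne_zero (Real.rpow_pos_of_pos hq _).ne' (one_sub_rpow_neg_two_ne_zero hq hq1))
    (Real.sqrt_pos.mpr (mul_pos (qint_pos hq hq1 h₁) (qint_pos hq hq1 h₂))).ne'

lemma one_sub_rpow_neg_two_mul_rpow_add_one_mul_qint (hq : 0 < q) (hq1 : q ≠ 1) (l : ℝ) :
    (1 - q ^ (-2 : ℝ)) * (q ^ (l + 1) * qint q l) = q ^ (2 * l) - 1 := by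
  have := sq_sub_one_ne_zero hq hq1
  have := (Real.rpow_pos_of_pos hq l).ne'
  simp only [qint, Real.rpow_add hq, Real.rpow_neg hq.le, Real.rpow_two_mul hq.le, Real.rpow_one,
    Real.rpow_two]
  field_simp

lemma one_sub_rpow_neg_two_mul_neg_rpow_neg_mul_qint (hq : 0 < q) (hq1 : q ≠ 1) (l : ℝ) :
    (1 - q ^ (-2 : ℝ)) * -(q ^ (-l) * qint q (l + 1)) = q ^ (-2 * l - 2) - 1 := by
  have := sq_sub_one_ne_zero hq hq1
  have := (Real.rpow_pos_of_pos hq l).ne'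
  simp only [qint, neg_mul, Real.rpow_add hq, Real.rpow_sub hq, Real.rpow_neg hq.le,
    Real.rpow_two_mul hq.le, Real.rpow_one, Real.rpow_two]
  field_simp
  ring

lemma neg_rpow_neg_mul_qint_add_one_lt_rpow_add_one_mul_qint (hq : 0 < q) (hq1 : q ≠ 1) {l : ℝ}
    (hl : 0 < l) : -(q ^ (-l) * qint q (l + 1)) < q ^ (l + 1) * qint q l := by
  have h₁ := mul_pos (Real.rpow_pos_of_pos hq (l + 1)) (qint_pos hq hq1 hl)
  have h₂ := mul_pos (Real.rpow_pos_of_pos hq (-l)) (qint_pos hq hq1 (x := l + 1) (by linarith))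
  linarith

end QIdentities

noncomputable def diracMatrix (q : ℝ) (n : ℕ) :
    Matrix (Fin 2 × Fin (n + 1)) (Fin 2 × Fin (n + 1)) ℝ :=
  shiftBlockMatrix n (fun k => sigma11 q (n / 2) (k - n / 2))
    (fun k => sigma12 q (n / 2) (k - n / 2)) (fun k => sigma21 q (n / 2) (k - n / 2))
    (fun k => sigma22 q (k - n / 2))

section DiracMatrix

variable {q : ℝ}

lemma diracMatrix_sub_smul_one_mul_sub_smul_one (hq : 0 < q) (hq1 : q ≠ 1) (n : ℕ) :
    (diracMatrix q n - (q ^ (2 * (n / 2 : ℝ)) - 1) • 1) *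
      (diracMatrix q n - (q ^ (-2 * (n / 2 : ℝ) - 2) - 1) • 1) = 0 := by
  refine shiftBlockMatrix_sub_smul_one_mul_sub_smul_one (fun k _ => ?_) (fun k hk => ?_) ?_ ?_
  · rw [Nat.cast_succ, add_sub_right_comm]
    exact sigma11_add_sigma22 _ _
  · rw [Nat.cast_succ, add_sub_right_comm]
    have hk' : (k : ℝ) + 1 ≤ n := by exact_mod_cast hk
    exact sigma11_mul_sigma22_sub_sigma12_mul_sigma21 hq hq1 (by linarith) (by linarith)
  · rw [show (n : ℝ) - n / 2 = n / 2 by ring]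
    exact sigma11_self _
  · rw [Nat.cast_zero, zero_sub]
    exact sigma22_neg _

lemma diracMatrix_apply_ne_zero (hq : 0 < q) (hq1 : q ≠ 1) {n : ℕ} (hn : 1 ≤ n) :
    diracMatrix q n (0, 0) (1, ⟨1, by omega⟩) ≠ 0 := by
  have hn' : (1 : ℝ) ≤ n := by exact_mod_cast hn
  rw [diracMatrix, shiftBlockMatrix_apply_zero_one, if_pos (by simp)]
  exact sigma12_ne_zero hq hq1 (by simp) (by simp; linarith)

end DiracMatrix

/-- Section 7.4: the block operator `D` on the `2(2l+1)`-dimensional spinor space,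
with blocks the symbols `σ^{11}, σ^{12}, σ^{21}, σ^{22}` of (7.19) (here `l = n/2 > 0`,
weights `m = j − l ∈ {−l,…,l}`, `λ = 1 − q^{−2}`), has after normalisation by `λ`
exactly the two eigenvalues `q^{l+1}[l]_q` and `−q^{−l}[l+1]_q`, and is diagonalisable. -/
theorem dirac_4D_eigenvalues (q : ℝ) (hq : 0 < q) (hq1 : q ≠ 1) (n : ℕ) (hn : 1 ≤ n) :
    let l : ℝ := (n : ℝ) / 2
    let lam : ℝ := 1 - q ^ (-2 : ℝ)
    let D : Matrix (Fin 2 × Fin (n + 1)) (Fin 2 × Fin (n + 1)) ℝ :=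
      Matrix.of fun p r =>
        if p.1 = 0 ∧ r.1 = 0 then
          (if p.2 = r.2 then
              q ^ (2 * l) + q ^ (-2 * l - 2) - q ^ (-2 * (((r.2 : ℕ) : ℝ) - l) - 2) - 1
            else 0)
        else if p.1 = 0 ∧ r.1 = 1 then
          (if (p.2 : ℕ) + 1 = (r.2 : ℕ) then
              q ^ (-(((r.2 : ℕ) : ℝ) - l) + 1 / 2) * lam *
                Real.sqrt (qint q (l + (((r.2 : ℕ) : ℝ) - l)) *
                  qint q (l - (((r.2 : ℕ) : ℝ) - l) + 1))
            else 0)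
        else if p.1 = 1 ∧ r.1 = 0 then
          (if (p.2 : ℕ) = (r.2 : ℕ) + 1 then
              q ^ (-(((r.2 : ℕ) : ℝ) - l) - 1 / 2) * lam *
                Real.sqrt (qint q (l - (((r.2 : ℕ) : ℝ) - l)) *
                  qint q (l + (((r.2 : ℕ) : ℝ) - l) + 1))
            else 0)
        else (if p.2 = r.2 then q ^ (-2 * (((r.2 : ℕ) : ℝ) - l)) - 1 else 0)
    (∀ μ : ℝ,
        Module.End.HasEigenvalue (Matrix.toLin' (lam⁻¹ • D)) μ ↔
          (μ = q ^ (l + 1) * qint q l ∨ μ = -(q ^ (-l) * qint q (l + 1)))) ∧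
      (⨆ μ : ℝ, Module.End.eigenspace (Matrix.toLin' (lam⁻¹ • D)) μ) = ⊤ := by
  intro l lam D
  have hD : D = diracMatrix q n := rfl
  have hlam : lam ≠ 0 := one_sub_rpow_neg_two_ne_zero hq hq1
  have hf := Matrix.toLin'_inv_smul_sub_smul_one_mul_eq_zero (A := D)
    (μ := q ^ (l + 1) * qint q l) (ν := -(q ^ (-l) * qint q (l + 1))) hlam (by
      rw [one_sub_rpow_neg_two_mul_rpow_add_one_mul_qint hq hq1,
        one_sub_rpow_neg_two_mul_neg_rpow_neg_mul_qint hq hq1, hD]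
      exact diracMatrix_sub_smul_one_mul_sub_smul_one hq hq1 n)
  have hns (c : ℝ) : Matrix.toLin' (lam⁻¹ • D) ≠ c • 1 :=
    Matrix.toLin'_ne_smul_one (A := lam⁻¹ • D) (i := (0, 0)) (j := (1, ⟨1, by omega⟩)) (by simp)
      (mul_ne_zero (inv_ne_zero hlam) (hD ▸ diracMatrix_apply_ne_zero hq hq1 hn)) c
  exact ⟨fun μ => Module.End.hasEigenvalue_iff_of_mul_eq_zero hf (hns _) (hns _),
    Module.End.iSup_eigenspace_eq_top hf
      (neg_rpow_neg_mul_qint_add_one_lt_rpow_add_one_mul_qint hq hq1 (by positivity)).ne'⟩
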